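/- Every critical point of the pseudo del Pezzo superpotential W(x₁,…,xₙ) = Σⱼ xⱼ + Σⱼ 1/xⱼ + Πⱼ xⱼ on (ℂ*)^n, with n even, is non-degenerate: the Hessian matrix of second partial derivatives is invertible at every critical point. -/

import Mathlib

/-!
At a critical point every coordinate is a root of `t ^ 2 + P t - 1`, where `P = ∏ⱼ xⱼ`, so the
coordinates take at most two values `r` and `-r⁻¹`. The Hessian there is `diag ((1 + xᵢ²) / xᵢ³)`
plus the rank one matrix `(P / (xᵢ xⱼ))`, so by the matrix determinant lemma it is singular only
if some `1 + xᵢ²` vanishes or if `1 + ∑ᵢ (1 - xᵢ²) / (1 + xᵢ²) = 0`.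
In the first case all coordinates equal one `y` with `y ^ 2 = -1` and `y ^ n = P = -2 y`, which is
absurd after raising to the fourth power. In the second case, with `k` coordinates equal to `r`
and `l` equal to `-r⁻¹`, the sum condition forces `ρ = r ^ 2 = (m + 1) / (m - 1)` for the even
integer `m = k - l`, while the product relation gives `ρ ^ (k + 1) = (1 - ρ) ^ 2 * ρ ^ l`;
clearing denominators equates an odd integer with a multiple of `4`.
-/

/-- Partial derivative of `f` at `x` in the `i`-th coordinate direction. -/
noncomputable def pgrad {n : ℕ} (f : (Fin n → ℂ) → ℂ) (x : Fin n → ℂ)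
    (i : Fin n) : ℂ :=
  fderiv ℂ f x (Pi.single i 1)

/-- Hessian matrix of second partial derivatives of `f` at `x`. -/
noncomputable def pHess {n : ℕ} (f : (Fin n → ℂ) → ℂ) (x : Fin n → ℂ) :
    Matrix (Fin n) (Fin n) ℂ :=
  Matrix.of fun i j => fderiv ℂ (fun y => pgrad f y j) x (Pi.single i 1)

open Finset Filter Topology

theorem Matrix.det_diagonal_add_vecMulVec {K ι : Type*} [Field K] [Fintype ι] [DecidableEq ι]
    {d : ι → K} (hd : ∀ i, d i ≠ 0) (u v : ι → K) :
    (diagonal d + vecMulVec u v).det = (∏ i, d i) * (1 + ∑ i, u i * v i / d i) := by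
  have hfactor : diagonal d + vecMulVec u v = diagonal d * (1 + vecMulVec (u / d) v) := by
    rw [Matrix.mul_add, Matrix.mul_one, mul_vecMulVec]
    congr 2
    ext i
    simp [mulVec_diagonal, mul_div_cancel₀ _ (hd i)]
  rw [hfactor, det_mul, det_diagonal, vecMulVec_eq Unit, det_one_add_replicateCol_mul_replicateRow,
    dotProduct]
  simp only [Pi.div_apply, mul_comm (v _), div_mul_eq_mul_div]

theorem one_sub_sq_div_one_add_sq_neg_inv {K : Type*} [Field K] {r : K} (hr : r ≠ 0) :
    (1 - (-r⁻¹) ^ 2) / (1 + (-r⁻¹) ^ 2) = -((1 - r ^ 2) / (1 + r ^ 2)) := by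
  have hr2 : r ^ 2 ≠ 0 := pow_ne_zero 2 hr
  rw [neg_sq, inv_pow, ← mul_div_mul_left _ _ hr2, mul_sub, mul_add, mul_one,
    mul_inv_cancel₀ hr2, ← neg_div, neg_sub, add_comm]

section CriticalEquations

variable {K ι : Type*} [Field K] [CharZero K] [Fintype ι] {x : ι → K}

theorem pow_ne_sq_one_sub_mul_pow {ρ : K} {m : ℤ} (hm : Even m)
    (hρ : 1 + ρ + m * (1 - ρ) = 0) (p q : ℕ) : ρ ^ p ≠ (1 - ρ) ^ 2 * ρ ^ q := by
  intro h
  have hρb : ρ * (m - 1) = m + 1 := by linear_combination -hρ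
  have hρb' : (1 - ρ) * (m - 1) = -2 := by linear_combination hρ
  have hK : ((m : K) + 1) ^ p * ((m : K) - 1) ^ q * ((m : K) - 1) ^ 2
      = 4 * ((m : K) + 1) ^ q * ((m : K) - 1) ^ p := by
    rw [← hρb, mul_pow, mul_pow, h]
    linear_combination
      (ρ ^ q * ((m : K) - 1) ^ p * ((m : K) - 1) ^ q * ((1 - ρ) * (m - 1) - 2)) * hρb'
  have hZ : (m + 1) ^ p * (m - 1) ^ q * (m - 1) ^ 2 = 4 * (m + 1) ^ q * (m - 1) ^ p := by
    exact_mod_cast hK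
  have hodd : Odd ((m + 1) ^ p * (m - 1) ^ q * (m - 1) ^ 2) :=
    (hm.add_one.pow.mul (hm.sub_odd odd_one).pow).mul (hm.sub_odd odd_one).pow
  rw [hZ] at hodd
  exact Int.not_even_iff_odd.mpr hodd ⟨2 * (m + 1) ^ q * (m - 1) ^ p, by ring⟩

theorem one_add_sq_ne_zero_of_sq_add_prod_mul_eq_one
    (hcrit : ∀ i, x i ^ 2 + (∏ j, x j) * x i = 1) (i : ι) : 1 + x i ^ 2 ≠ 0 := by
  intro h
  set P := ∏ j, x j with hP
  have hsq : x i ^ 2 = -1 := by linear_combination h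
  have hPi : P = -2 * x i := by linear_combination (x i + P) * hsq - x i * hcrit i
  -- `x i` is then a double root of `t ^ 2 + P t - 1`
  have hconst : ∀ j, x j = x i := fun j => by
    have : (x j - x i) ^ 2 = 0 := by linear_combination hcrit j + hsq - x j * hPi
    exact sub_eq_zero.mp (pow_eq_zero_iff two_ne_zero |>.mp this)
  have hPpow : P = x i ^ Fintype.card ι := by
    rw [hP, prod_congr rfl fun j _ => hconst j, prod_const, card_univ]
  have : (16 : K) = 1 := calc
    (16 : K) = (-2 * x i) ^ 4 := by linear_combination (16 - 16 * x i ^ 2) * hsq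
    _ = (x i ^ 4) ^ Fintype.card ι := by rw [← hPi, hPpow, ← pow_mul, ← pow_mul, mul_comm]
    _ = 1 := by rw [show x i ^ 4 = (x i ^ 2) ^ 2 by ring, hsq]; norm_num
  norm_num at this

theorem one_add_sum_ne_zero_of_sq_add_prod_mul_eq_one (hn : Even (Fintype.card ι))
    (hcrit : ∀ i, x i ^ 2 + (∏ j, x j) * x i = 1) :
    1 + ∑ i, (1 - x i ^ 2) / (1 + x i ^ 2) ≠ 0 := by
  classical
  intro hsum
  rcases isEmpty_or_nonempty ι with hι | ⟨⟨i₀⟩⟩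
  · simp at hsum
  set P := ∏ j, x j with hP
  set r := x i₀
  have hr : r * (r + P) = 1 := by linear_combination hcrit i₀
  have hr0 : r ≠ 0 := left_ne_zero_of_mul_eq_one hr
  have hroot : ∀ i, x i ≠ r → x i = -r⁻¹ := fun i hi => by
    have : (x i - r) * (x i + (r + P)) = 0 := by linear_combination hcrit i - hcrit i₀
    rw [eq_inv_of_mul_eq_one_right hr] at this
    linear_combination (mul_eq_zero.mp this).resolve_left (sub_ne_zero.mpr hi)
  set S := univ.filter (x · = r)
  have hS : ∀ i ∈ S, x i = r := fun i hi => (mem_filter.mp hi).2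
  have hSc : ∀ i ∈ Sᶜ, x i = -r⁻¹ := fun i hi => hroot i (by simpa [S] using hi)
  obtain ⟨σ, hσ⟩ : ∃ σ, σ * (1 + r ^ 2) = 1 - r ^ 2 ∧ (1 - r ^ 2) / (1 + r ^ 2) = σ :=
    ⟨_, div_mul_cancel₀ _ (one_add_sq_ne_zero_of_sq_add_prod_mul_eq_one hcrit i₀), rfl⟩
  rw [← sum_add_sum_compl S,
    sum_eq_card_nsmul fun i hi => by rw [hS i hi, hσ.2],
    sum_eq_card_nsmul fun i hi => by rw [hSc i hi, one_sub_sq_div_one_add_sq_neg_inv hr0, hσ.2],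
    nsmul_eq_mul, nsmul_eq_mul] at hsum
  have hlin : 1 + r ^ 2 + (((#S : ℤ) - #Sᶜ : ℤ) : K) * (1 - r ^ 2) = 0 := by
    push_cast
    linear_combination (1 + r ^ 2) * hsum - (#S - #Sᶜ : K) * hσ.1
  have hprod : P = r ^ #S * (-r⁻¹) ^ #Sᶜ := by
    rw [hP, ← prod_mul_prod_compl S, prod_congr rfl hS, prod_congr rfl hSc, prod_const,
      prod_const]
  have hmixed : (1 - r ^ 2) * r ^ #Sᶜ = (-1) ^ #Sᶜ * r ^ (#S + 1) := calc
    (1 - r ^ 2) * r ^ #Sᶜ = r ^ (#S + 1) * (-r⁻¹ * r) ^ #Sᶜ := by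
      rw [hprod] at hr; linear_combination -r ^ #Sᶜ * hr
    _ = (-1) ^ #Sᶜ * r ^ (#S + 1) := by rw [neg_mul, inv_mul_cancel₀ hr0, mul_comm]
  refine pow_ne_sq_one_sub_mul_pow ?_ hlin (#S + 1) #Sᶜ ?_
  · have hcard : Even ((#S : ℤ) + #Sᶜ) := by exact_mod_cast (card_add_card_compl S).symm ▸ hn
    rw [show (#S : ℤ) - #Sᶜ = #S + #Sᶜ - 2 * #Sᶜ by ring]
    exact hcard.sub (even_two_mul _)
  · have hsq := congrArg (· ^ 2) hmixed
    simp only [mul_pow, ← pow_mul] at hsq ⊢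
    rw [mul_comm #Sᶜ 2, pow_mul (-1 : K), neg_one_sq, one_pow, one_mul] at hsq
    rw [hsq]; ring

end CriticalEquations

section PartialDerivatives

open ContinuousLinearMap

variable {n : ℕ} {f g : (Fin n → ℂ) → ℂ} {x : Fin n → ℂ}

theorem pgrad_eq_of_hasFDerivAt {f' : (Fin n → ℂ) →L[ℂ] ℂ} (hf : HasFDerivAt f f' x)
    (i : Fin n) : pgrad f x i = f' (Pi.single i 1) := by
  rw [pgrad, hf.fderiv]

theorem pgrad_congr (h : f =ᶠ[𝓝 x] g) : pgrad f x = pgrad g x := by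
  ext i; rw [pgrad, pgrad, h.fderiv_eq]

theorem pHess_apply (f : (Fin n → ℂ) → ℂ) (x : Fin n → ℂ) (i j : Fin n) :
    pHess f x i j = pgrad (fun y => pgrad f y j) x i := rfl

end PartialDerivatives

noncomputable def pseudoDelPezzo (n : ℕ) (x : Fin n → ℂ) : ℂ :=
  (∑ j, x j) + (∑ j, (x j)⁻¹) + (∏ j, x j)

section PseudoDelPezzo

open ContinuousLinearMap

variable {n : ℕ} {x : Fin n → ℂ}

theorem hasFDerivAt_pseudoDelPezzo (hx : ∀ j, x j ≠ 0) :
    HasFDerivAt (pseudoDelPezzo n)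
      (∑ j, (1 - (x j ^ 2)⁻¹ + ∏ k ∈ univ.erase j, x k) •
        (proj j : (Fin n → ℂ) →L[ℂ] ℂ)) x := by
  have hproj (j : Fin n) :
      HasFDerivAt (fun y : Fin n → ℂ => y j) (proj j : (Fin n → ℂ) →L[ℂ] ℂ) x :=
    hasFDerivAt_apply j x
  have hsum := HasFDerivAt.fun_sum (u := univ) fun j _ => hproj j
  have hinv := HasFDerivAt.fun_sum (u := univ) fun j _ =>
    (hasDerivAt_inv (hx j)).comp_hasFDerivAt x (hproj j)
  have hprod := HasFDerivAt.finsetProd (u := univ) fun j _ => hproj j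
  refine ((hsum.add hinv).add hprod).congr_fderiv ?_
  rw [← sum_add_distrib, ← sum_add_distrib]
  refine sum_congr rfl fun j _ => ?_
  ext v
  simp only [add_apply, smul_apply, proj_apply, smul_eq_mul]
  ring

theorem pgrad_pseudoDelPezzo (hx : ∀ j, x j ≠ 0) (i : Fin n) :
    pgrad (pseudoDelPezzo n) x i = 1 - (x i ^ 2)⁻¹ + ∏ k ∈ univ.erase i, x k := by
  simp [pgrad_eq_of_hasFDerivAt (hasFDerivAt_pseudoDelPezzo hx), Pi.single_apply]

theorem pgrad_pseudoDelPezzo_eq_zero_iff (hx : ∀ j, x j ≠ 0) (i : Fin n) :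
    pgrad (pseudoDelPezzo n) x i = 0 ↔ x i ^ 2 + (∏ j, x j) * x i = 1 := by
  rw [pgrad_pseudoDelPezzo hx, ← mul_prod_erase univ x (mem_univ i)]
  have hi := hx i
  constructor <;> intro h
  · field_simp at h; linear_combination h
  · field_simp; linear_combination h

theorem pHess_pseudoDelPezzo_apply (hx : ∀ j, x j ≠ 0) (i j : Fin n) :
    pHess (pseudoDelPezzo n) x i j
      = if i = j then 2 / x j ^ 3 else ∏ l ∈ (univ.erase j).erase i, x l := by
  have hnear : ∀ᶠ y in 𝓝 x, ∀ k, y k ≠ 0 :=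
    eventually_all.2 fun k => (continuous_apply k).continuousAt.eventually_ne (hx k)
  have hgrad : (fun y => pgrad (pseudoDelPezzo n) y j)
      =ᶠ[𝓝 x] fun y => 1 - (y j ^ 2)⁻¹ + ∏ k ∈ univ.erase j, y k :=
    hnear.mono fun y hy => pgrad_pseudoDelPezzo hy j
  have hproj (k : Fin n) :
      HasFDerivAt (fun y : Fin n → ℂ => y k) (proj k : (Fin n → ℂ) →L[ℂ] ℂ) x :=
    hasFDerivAt_apply k x
  have hsqinv : HasDerivAt (fun t : ℂ => (t ^ 2)⁻¹) (-2 / x j ^ 3) (x j) :=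
    ((hasDerivAt_pow 2 (x j)).inv (pow_ne_zero 2 (hx j))).congr_deriv <| by
      field_simp [hx j]; norm_num [mul_comm]
  have hsqinv_coord := hsqinv.comp_hasFDerivAt x (hproj j)
  have hprod := HasFDerivAt.finsetProd (u := univ.erase j) fun k _ => hproj k
  have hderiv :
      HasFDerivAt (fun y : Fin n → ℂ => 1 - (y j ^ 2)⁻¹ + ∏ k ∈ univ.erase j, y k) _ x :=
    ((hasFDerivAt_const 1 x).sub hsqinv_coord).add hprod
  rw [pHess_apply, pgrad_congr hgrad, pgrad_eq_of_hasFDerivAt hderiv]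
  split_ifs with hij
  · subst hij
    simp [Pi.single_apply, neg_div]
  · simp [Pi.single_apply, hij]

open Matrix in
theorem pHess_pseudoDelPezzo_of_sq_add_prod_mul_eq_one (hx : ∀ j, x j ≠ 0)
    (hcrit : ∀ i, x i ^ 2 + (∏ j, x j) * x i = 1) :
    pHess (pseudoDelPezzo n) x = diagonal (fun i => (1 + x i ^ 2) / x i ^ 3)
      + vecMulVec (fun i => (∏ k, x k) / x i) (fun j => (x j)⁻¹) := by
  ext i j
  rw [pHess_pseudoDelPezzo_apply hx, Matrix.add_apply, diagonal_apply, vecMulVec_apply]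
  rcases eq_or_ne i j with rfl | hij
  · simp only [if_true]
    field_simp [hx i]
    linear_combination -hcrit i
  · have hP : ∏ k, x k = x i * x j * ∏ l ∈ (univ.erase j).erase i, x l := by
      rw [mul_right_comm, mul_prod_erase _ x (mem_erase.2 ⟨hij, mem_univ i⟩),
        prod_erase_mul univ x (mem_univ j)]
    rw [if_neg hij, if_neg hij, zero_add, hP]
    field_simp [hx i, hx j]

end PseudoDelPezzo

theorem stmt_16_general (n : ℕ) (hn : Even n)
    (W : (Fin n → ℂ) → ℂ)
    (hW : ∀ x, W x = (∑ j, x j) + (∑ j, (x j)⁻¹) + (∏ j, x j))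
    (x : Fin n → ℂ) (hx : ∀ i, x i ≠ 0)
    (hcrit : ∀ i, pgrad W x i = 0) :
    (pHess W x).det ≠ 0 := by
  obtain rfl : W = pseudoDelPezzo n := funext hW
  have hcrit' : ∀ i, x i ^ 2 + (∏ j, x j) * x i = 1 := fun i =>
    (pgrad_pseudoDelPezzo_eq_zero_iff hx i).1 (hcrit i)
  have hd : ∀ i, (1 + x i ^ 2) / x i ^ 3 ≠ 0 := fun i =>
    div_ne_zero (one_add_sq_ne_zero_of_sq_add_prod_mul_eq_one hcrit' i) (pow_ne_zero 3 (hx i))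
  rw [pHess_pseudoDelPezzo_of_sq_add_prod_mul_eq_one hx hcrit',
    Matrix.det_diagonal_add_vecMulVec hd]
  refine mul_ne_zero (prod_ne_zero_iff.2 fun i _ => hd i) ?_
  convert one_add_sum_ne_zero_of_sq_add_prod_mul_eq_one (by simpa using hn) hcrit' using 3 with i
  have hi := hx i
  have hi' := one_add_sq_ne_zero_of_sq_add_prod_mul_eq_one hcrit' i
  field_simp
  linear_combination hcrit' i

/-- every critical point of the pseudo del Pezzo superpotential
`W(x) = Σ xⱼ + Σ 1/xⱼ + Π xⱼ` on `(ℂ*)^n`, `n` even positive,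
is non-degenerate. -/
theorem stmt_16 (n : ℕ) (hn : Even n) (hpos : 0 < n)
    (W : (Fin n → ℂ) → ℂ)
    (hW : ∀ x, W x = (∑ j, x j) + (∑ j, (x j)⁻¹) + (∏ j, x j))
    (x : Fin n → ℂ) (hx : ∀ i, x i ≠ 0)
    (hcrit : ∀ i, pgrad W x i = 0) :
    (pHess W x).det ≠ 0 :=
  stmt_16_general n hn W hW x hx hcrit
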